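/- arXiv:1803.03934 — 4 statements merged into one kernel-verified Lean document; each statement's English description precedes it below -/
import Mathlib

section
/- Let 𝒳 be a measurable space, X = (X₁,…,Xₙ) a vector of independent 𝒳-valued random variables, and f : 𝒳ⁿ → ℝ bounded measurable with M(f) ≤ a/n for some a > 0. Then the variance of f(X) satisfies σ²(f) ≤ a²/(4n). -/
open MeasureTheory ProbabilityTheory

/-- Partial difference operator `D^k_{y,y'} f (x)`. -/
noncomputable def partialDiff {𝒳 : Type*} {n : ℕ} (f : (Fin n → 𝒳) → ℝ) (k : Fin n)
    (y y' : 𝒳) (x : Fin n → 𝒳) : ℝ :=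
  f (Function.update x k y) - f (Function.update x k y')

/-- The seminorm `M(f) = max_k sup_{x,y,y'} D^k_{y,y'} f(x)`. -/
noncomputable def Msem {𝒳 : Type*} {n : ℕ} (f : (Fin n → 𝒳) → ℝ) : ℝ :=
  ⨆ k : Fin n, ⨆ x : Fin n → 𝒳, ⨆ y : 𝒳, ⨆ y' : 𝒳, partialDiff f k y y' x

/-- The seminorm `J(f) = n · max_{l ≠ k} sup_{x,z,z',y,y'} D^l_{z,z'} D^k_{y,y'} f(x)`. -/
noncomputable def Jsem {𝒳 : Type*} {n : ℕ} (f : (Fin n → 𝒳) → ℝ) : ℝ :=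
  n * ⨆ k : Fin n, ⨆ l : Fin n, ⨆ _ : l ≠ k, ⨆ x : Fin n → 𝒳, ⨆ z : 𝒳, ⨆ z' : 𝒳,
      ⨆ y : 𝒳, ⨆ y' : 𝒳, partialDiff (partialDiff f k y y') l z z' x

/-!
Peeling off the first coordinate, the variance of `f` splits into the average over the other
coordinates of the variance in the first one, plus the variance of the average over the first
one. The former is a variance of a function whose oscillation is at most `M(f)`, hence at most
`M(f)² / 4` by Popoviciu's inequality; the latter is the variance of a function of `n - 1`
variables whose partial differences are still at most `M(f)`. By induction
`σ²(f) ≤ n · M(f)² / 4 ≤ n · (a / n)² / 4 = a² / (4n)`.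
-/

open Function

section PartialDiff

variable {𝒳 : Type*} {n : ℕ}

lemma partialDiff_le_Msem {f : (Fin n → 𝒳) → ℝ} {C : ℝ} (hC : ∀ x, |f x| ≤ C) (k : Fin n)
    (x : Fin n → 𝒳) (y y' : 𝒳) : partialDiff f k y y' x ≤ Msem f := by
  have hb : ∀ k x y y', partialDiff f k y y' x ≤ 2 * C := fun k x y y' => by
    unfold partialDiff
    linarith [abs_le.1 (hC (update x k y)), abs_le.1 (hC (update x k y'))]
  have : Nonempty 𝒳 := ⟨y⟩
  have : Nonempty (Fin n → 𝒳) := ⟨x⟩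
  refine le_ciSup_of_le ⟨2 * C, Set.forall_mem_range.2 fun k =>
      ciSup_le fun x => ciSup_le fun y => ciSup_le fun y' => hb k x y y'⟩ k <|
    le_ciSup_of_le ⟨2 * C, Set.forall_mem_range.2 fun x =>
      ciSup_le fun y => ciSup_le fun y' => hb k x y y'⟩ x <|
    le_ciSup_of_le ⟨2 * C, Set.forall_mem_range.2 fun y => ciSup_le fun y' => hb k x y y'⟩ y <|
    le_ciSup ⟨2 * C, Set.forall_mem_range.2 fun y' => hb k x y y'⟩ y'

lemma partialDiff_zero_cons (f : (Fin (n + 1) → 𝒳) → ℝ) (x y y' : 𝒳) (t : Fin n → 𝒳) :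
    partialDiff f 0 y y' (Fin.cons x t) = f (Fin.cons y t) - f (Fin.cons y' t) := by
  simp only [partialDiff, Fin.update_cons_zero]

lemma partialDiff_comp_cons (f : (Fin (n + 1) → 𝒳) → ℝ) (x : 𝒳) (k : Fin n) (y y' : 𝒳)
    (t : Fin n → 𝒳) :
    partialDiff (fun t => f (Fin.cons x t)) k y y' t =
      partialDiff f k.succ y y' (Fin.cons x t) := by
  simp only [partialDiff, Fin.cons_update]

lemma partialDiff_integral_le {α : Type*} [MeasurableSpace α] {ρ : Measure α}
    [IsProbabilityMeasure ρ] {G : α → (Fin n → 𝒳) → ℝ}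
    (hG : ∀ t, Integrable (fun s => G s t) ρ) {c : ℝ}
    (hc : ∀ s k t y y', partialDiff (G s) k y y' t ≤ c) (k : Fin n) (t : Fin n → 𝒳)
    (y y' : 𝒳) : partialDiff (fun t => ∫ s, G s t ∂ρ) k y y' t ≤ c := by
  unfold partialDiff
  rw [← integral_sub (hG _) (hG _)]
  simpa using integral_mono ((hG _).sub (hG _)) (integrable_const c) fun s => hc s k t y y'

end PartialDiff

section Variance

variable {Ω : Type*} [MeasurableSpace Ω] {μ : Measure Ω}

lemma memLp_two_of_abs_le [IsFiniteMeasure μ] {X : Ω → ℝ} (hX : AEStronglyMeasurable X μ)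
    {C : ℝ} (hC : ∀ ω, |X ω| ≤ C) : MemLp X 2 μ :=
  MemLp.of_bound hX C (ae_of_all μ fun ω => by simpa using hC ω)

lemma abs_integral_le_of_abs_le [IsProbabilityMeasure μ] {X : Ω → ℝ} {C : ℝ}
    (hC : ∀ ω, |X ω| ≤ C) : |∫ ω, X ω ∂μ| ≤ C := by
  simpa using norm_integral_le_of_norm_le_const (μ := μ) (f := X)
    (ae_of_all μ fun ω => by simpa using hC ω)

lemma variance_le_sq_div_four_of_sub_le [IsProbabilityMeasure μ] {X : Ω → ℝ}
    (hX : AEMeasurable X μ) {c : ℝ} (hc : ∀ ω ω', X ω - X ω' ≤ c) :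
    variance X μ ≤ c ^ 2 / 4 := by
  have : Nonempty Ω := nonempty_of_isProbabilityMeasure μ
  have hbdd : BddBelow (Set.range X) :=
    ⟨X (Classical.arbitrary Ω) - c, by rintro _ ⟨ω, rfl⟩; linarith [hc (Classical.arbitrary Ω) ω]⟩
  have hrange : ∀ ω, X ω ∈ Set.Icc (⨅ ω, X ω) ((⨅ ω, X ω) + c) := fun ω =>
    ⟨ciInf_le hbdd ω, by linarith [le_ciInf fun ω' => (by linarith [hc ω ω'] : X ω - c ≤ X ω')]⟩
  convert variance_le_sq_of_bounded (ae_of_all μ hrange) hX using 1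
  ring

end Variance

lemma variance_prod_le {α β : Type*} [MeasurableSpace α] [MeasurableSpace β]
    {ρ : Measure α} {π : Measure β} [IsProbabilityMeasure ρ] [IsProbabilityMeasure π]
    {F : α × β → ℝ} (hF : Measurable F) {C : ℝ} (hC : ∀ p, |F p| ≤ C) {v : ℝ}
    (hv : ∀ b, variance (fun a => F (a, b)) ρ ≤ v) :
    variance F (ρ.prod π) ≤ v + variance (fun b => ∫ a, F (a, b) ∂ρ) π := by
  set g : β → ℝ := fun b => ∫ a, F (a, b) ∂ρ
  have hF₂ : MemLp F 2 (ρ.prod π) := memLp_two_of_abs_le hF.aestronglyMeasurable hC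
  have hg₂ : MemLp g 2 π := memLp_two_of_abs_le
    hF.stronglyMeasurable.integral_prod_left'.aestronglyMeasurable
    fun b => abs_integral_le_of_abs_le fun a => hC (a, b)
  have hsecond_moment : ∀ b, ∫ a, F (a, b) ^ 2 ∂ρ ≤ v + g b ^ 2 := fun b => by
    have hslice : MemLp (fun a => F (a, b)) 2 ρ :=
      memLp_two_of_abs_le (hF.comp measurable_prodMk_right).aestronglyMeasurable fun a => hC _
    have := variance_eq_sub hslice
    simp only [Pi.pow_apply] at this
    linarith [hv b]
  have hmean : ∫ p, F p ∂(ρ.prod π) = ∫ b, g b ∂π :=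
    integral_prod_symm F (hF₂.integrable one_le_two)
  have hsq : ∫ p, F p ^ 2 ∂(ρ.prod π) ≤ v + ∫ b, g b ^ 2 ∂π := calc
    ∫ p, F p ^ 2 ∂(ρ.prod π) = ∫ b, ∫ a, F (a, b) ^ 2 ∂ρ ∂π :=
      integral_prod_symm (fun p => F p ^ 2) hF₂.integrable_sq
    _ ≤ ∫ b, (v + g b ^ 2) ∂π := integral_mono hF₂.integrable_sq.integral_prod_right
      ((integrable_const v).add hg₂.integrable_sq) hsecond_moment
    _ = v + ∫ b, g b ^ 2 ∂π := by simp [integral_add (integrable_const v) hg₂.integrable_sq]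
  rw [variance_eq_sub hF₂, variance_eq_sub hg₂]
  simp only [Pi.pow_apply, hmean]
  linarith

section FinCons

variable {𝒳 : Type*} [MeasurableSpace 𝒳] {n : ℕ}

lemma piFinSuccAbove_zero_symm_apply (p : 𝒳 × (Fin n → 𝒳)) :
    (MeasurableEquiv.piFinSuccAbove (fun _ => 𝒳) 0).symm p = Fin.cons p.1 p.2 := by
  simp [MeasurableEquiv.piFinSuccAbove_symm_apply, Fin.consEquiv]

lemma measurable_finCons :
    Measurable fun p : 𝒳 × (Fin n → 𝒳) => (Fin.cons p.1 p.2 : Fin (n + 1) → 𝒳) := by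
  simpa only [← piFinSuccAbove_zero_symm_apply] using
    (MeasurableEquiv.piFinSuccAbove (fun _ => 𝒳) 0).symm.measurable

lemma variance_pi_eq_variance_prod (μ : Fin (n + 1) → Measure 𝒳)
    [∀ i, IsProbabilityMeasure (μ i)] {f : (Fin (n + 1) → 𝒳) → ℝ} (hf : Measurable f) :
    variance f (Measure.pi μ) = variance (fun p : 𝒳 × (Fin n → 𝒳) => f (Fin.cons p.1 p.2))
      ((μ 0).prod (Measure.pi fun j => μ j.succ)) := by
  have := (measurePreserving_piFinSuccAbove μ 0).symm.variance_fun_comp hf.aemeasurable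
  simpa only [Fin.succAbove_zero, piFinSuccAbove_zero_symm_apply] using this.symm

end FinCons

theorem variance_pi_le_of_partialDiff_le {𝒳 : Type*} [MeasurableSpace 𝒳] {n : ℕ}
    (μ : Fin n → Measure 𝒳) [∀ i, IsProbabilityMeasure (μ i)] {f : (Fin n → 𝒳) → ℝ}
    (hf : Measurable f) {C : ℝ} (hC : ∀ x, |f x| ≤ C) {c : ℝ}
    (hc : ∀ k x y y', partialDiff f k y y' x ≤ c) :
    variance f (Measure.pi μ) ≤ n * (c ^ 2 / 4) := by
  induction n with
  | zero =>
    simpa using variance_le_sq_div_four_of_sub_le hf.aemeasurable (μ := Measure.pi μ) (c := 0)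
      fun x x' => by simp [Subsingleton.elim x x']
  | succ n ih =>
    set F : 𝒳 × (Fin n → 𝒳) → ℝ := fun p => f (Fin.cons p.1 p.2)
    have hF : Measurable F := hf.comp measurable_finCons
    have hslice : ∀ t, Integrable (fun s => F (s, t)) (μ 0) := fun t =>
      (memLp_two_of_abs_le (hF.comp measurable_prodMk_right).aestronglyMeasurable
        fun s => hC _).integrable one_le_two
    have hfibre : ∀ t, variance (fun s => F (s, t)) (μ 0) ≤ c ^ 2 / 4 := fun t =>
      variance_le_sq_div_four_of_sub_le (hF.comp measurable_prodMk_right).aemeasurable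
        fun s s' => partialDiff_zero_cons f s s s' t ▸ hc 0 _ s s'
    have hmarginal := ih (fun j => μ j.succ)
      hF.stronglyMeasurable.integral_prod_left'.measurable
      (fun t => abs_integral_le_of_abs_le fun s => hC _)
      (partialDiff_integral_le hslice fun s k t y y' =>
        partialDiff_comp_cons f s k y y' t ▸ hc k.succ _ y y')
    calc variance f (Measure.pi μ) = variance F ((μ 0).prod (Measure.pi fun j => μ j.succ)) :=
          variance_pi_eq_variance_prod μ hf
      _ ≤ c ^ 2 / 4 + n * (c ^ 2 / 4) :=
          (variance_prod_le hF (fun p => hC _) hfibre).trans (add_le_add_right hmarginal _)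
      _ = (n + 1 : ℕ) * (c ^ 2 / 4) := by push_cast; ring

theorem apriori_variance_bound_general {𝒳 : Type*} [MeasurableSpace 𝒳] {n : ℕ}
    (hn : 0 < n) (μ : Fin n → Measure 𝒳) [∀ i, IsProbabilityMeasure (μ i)]
    (f : (Fin n → 𝒳) → ℝ) (hf : Measurable f) (hbd : ∃ C, ∀ x, |f x| ≤ C)
    (a : ℝ) (hM : Msem f ≤ a / n) :
    variance f (Measure.pi μ) ≤ a ^ 2 / (4 * n) := by
  obtain ⟨C, hC⟩ := hbd
  calc variance f (Measure.pi μ) ≤ n * ((a / n) ^ 2 / 4) :=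
        variance_pi_le_of_partialDiff_le μ hf hC fun k x y y' =>
          (partialDiff_le_Msem hC k x y y').trans hM
    _ = a ^ 2 / (4 * n) := by field_simp

/-- A priori variance bound: if `M(f) ≤ a/n` then `σ²(f) ≤ a²/(4n)`. -/
theorem apriori_variance_bound {𝒳 : Type*} [MeasurableSpace 𝒳] [Nonempty 𝒳] {n : ℕ}
    (hn : 0 < n) (μ : Fin n → Measure 𝒳) [∀ i, IsProbabilityMeasure (μ i)]
    (f : (Fin n → 𝒳) → ℝ) (hf : Measurable f) (hbd : ∃ C, ∀ x, |f x| ≤ C)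
    (a : ℝ) (ha : 0 < a) (hM : Msem f ≤ a / n) :
    variance f (Measure.pi μ) ≤ a ^ 2 / (4 * n) :=
  apriori_variance_bound_general hn μ f hf hbd a hM
end

section
/- Let n > m ≥ 1, let 𝒳 be a measurable space, and for each multi-index j = (j₁,…,j_m) ∈ {1,…,n}^m let κ_j : 𝒳^m → [−1,1] be measurable. Define the V-statistic V : 𝒳ⁿ → ℝ by V(x) = n^{−m} Σ_{j∈{1,…,n}^m} κ_j(x_{j₁},…,x_{j_m}). Then M(V) ≤ 2m/n and J(V) ≤ 4m(m−1)/n; that is, V has (2m, 4m(m−1))-weak interactions. -/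
open MeasureTheory ProbabilityTheory

/-!
Each partial difference of `V` is `n⁻ᵐ` times the sum of the corresponding differences of the
summands `x ↦ κ j (x ∘ j)`. Such a summand does not depend on `x k` unless `k` occurs in `j`, so
its `k`-th difference vanishes unless `k ∈ range j` and is at most `2` otherwise; its mixed
`(k, l)`-difference vanishes unless both `k` and `l` occur in `j` and is at most `4`. Fixing one
coordinate of `j` leaves `n^(m-1)` multi-indices and fixing two leaves `n^(m-2)`, so at most
`m n^(m-1)` multi-indices hit `k` and at most `m (m-1) n^(m-2)` hit both `k ≠ l`.
-/

open Finset Function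

section PartialDiff

variable {𝒳 : Type*} {n : ℕ}

lemma Msem_le {f : (Fin n → 𝒳) → ℝ} {b : ℝ} (hb : 0 ≤ b)
    (h : ∀ k y y' x, partialDiff f k y y' x ≤ b) : Msem f ≤ b :=
  Real.iSup_le (fun k => Real.iSup_le (fun x => Real.iSup_le (fun y =>
    Real.iSup_le (fun y' => h k y y' x) hb) hb) hb) hb

lemma Jsem_le {f : (Fin n → 𝒳) → ℝ} {b : ℝ} (hb : 0 ≤ b)
    (h : ∀ k l, l ≠ k → ∀ y y' z z' x, partialDiff (partialDiff f k y y') l z z' x ≤ b) :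
    Jsem f ≤ n * b := by
  refine mul_le_mul_of_nonneg_left ?_ n.cast_nonneg
  refine Real.iSup_le (fun k => Real.iSup_le (fun l => Real.iSup_le (fun hlk =>
    Real.iSup_le (fun x => Real.iSup_le (fun z => Real.iSup_le (fun z' =>
    Real.iSup_le (fun y => Real.iSup_le (fun y' => h k l hlk y y' z z' x) hb) hb) hb) hb) hb)
    hb) hb) hb

lemma partialDiff_const_mul_sum {ι : Type*} (c : ℝ) (s : Finset ι)
    (f : ι → (Fin n → 𝒳) → ℝ) (k : Fin n) (y y' : 𝒳) :
    partialDiff (fun x => c * ∑ i ∈ s, f i x) k y y' =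
      fun x => c * ∑ i ∈ s, partialDiff (f i) k y y' x := by
  ext x
  simp only [partialDiff, ← mul_sub, ← sum_sub_distrib]

lemma abs_partialDiff_le {f : (Fin n → 𝒳) → ℝ} {c : ℝ} (hf : ∀ x, |f x| ≤ c)
    (k : Fin n) (y y' : 𝒳) (x : Fin n → 𝒳) : |partialDiff f k y y' x| ≤ 2 * c := by
  unfold partialDiff
  linarith [abs_sub (f (update x k y)) (f (update x k y')), hf (update x k y),
    hf (update x k y')]

lemma partialDiff_eq_zero_of_update_eq {f : (Fin n → 𝒳) → ℝ} {k : Fin n}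
    (hf : ∀ x w, f (update x k w) = f x) (y y' : 𝒳) (x : Fin n → 𝒳) :
    partialDiff f k y y' x = 0 := by
  simp [partialDiff, hf]

lemma partialDiff_update_eq {f : (Fin n → 𝒳) → ℝ} {k l : Fin n} (hlk : l ≠ k)
    (hf : ∀ x w, f (update x l w) = f x) (y y' : 𝒳) (x : Fin n → 𝒳) (w : 𝒳) :
    partialDiff f k y y' (update x l w) = partialDiff f k y y' x := by
  simp only [partialDiff, update_comm hlk w _ x, hf]

end PartialDiff

section Counting

variable {ι β : Type*} [Fintype ι] [DecidableEq ι] [Fintype β] [DecidableEq β]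

lemma card_filter_forall_mem_eq_mul_pow (S : Finset ι) (a : ι → β) :
    #{j : ι → β | ∀ i ∈ S, j i = a i} * Fintype.card β ^ #S =
      Fintype.card β ^ Fintype.card ι := by
  have hpi : ({j : ι → β | ∀ i ∈ S, j i = a i} : Finset _) =
      Fintype.piFinset fun i => if i ∈ S then {a i} else univ := by
    ext j
    simp only [mem_filter, mem_univ, true_and, Fintype.mem_piFinset]
    refine forall_congr' fun i => ?_
    split_ifs <;> simp [*]
  have hprod : ∏ i, #(if i ∈ S then {a i} else (univ : Finset β)) = Fintype.card β ^ #Sᶜ := by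
    simp_rw [apply_ite Finset.card, card_singleton, card_univ]
    rw [prod_ite, prod_const_one, one_mul, prod_const, filter_not, filter_mem_eq_inter, univ_inter,
      compl_eq_univ_sdiff]
  rw [hpi, Fintype.card_piFinset, hprod, ← pow_add, card_compl_add_card]

lemma card_filter_apply_eq_mul (t : ι) (b : β) :
    #{j : ι → β | j t = b} * Fintype.card β = Fintype.card β ^ Fintype.card ι := by
  simpa using card_filter_forall_mem_eq_mul_pow {t} fun _ => b

lemma card_filter_apply_eq_and_apply_eq_mul {t s : ι} (hts : t ≠ s) (b b' : β) :
    #{j : ι → β | j t = b ∧ j s = b'} * Fintype.card β ^ 2 = Fintype.card β ^ Fintype.card ι := by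
  have := card_filter_forall_mem_eq_mul_pow {t, s} (update (fun _ => b') t b)
  simpa [card_pair hts, update_of_ne hts.symm] using this

lemma card_filter_exists_apply_eq_mul_le (b : β) :
    #{j : ι → β | ∃ t, j t = b} * Fintype.card β ≤
      Fintype.card ι * Fintype.card β ^ Fintype.card ι := by
  have hsub : ({j : ι → β | ∃ t, j t = b} : Finset _) ⊆
      univ.biUnion fun t => {j : ι → β | j t = b} := by
    intro j; simp
  calc #{j : ι → β | ∃ t, j t = b} * Fintype.card β
      ≤ ∑ t, #{j : ι → β | j t = b} * Fintype.card β := by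
        rw [← sum_mul]; gcongr; exact (card_le_card hsub).trans card_biUnion_le
    _ = Fintype.card ι * Fintype.card β ^ Fintype.card ι := by simp [card_filter_apply_eq_mul]

lemma card_filter_exists_apply_eq_and_exists_apply_eq_mul_le {b b' : β} (hbb' : b ≠ b') :
    #{j : ι → β | (∃ t, j t = b) ∧ ∃ s, j s = b'} * Fintype.card β ^ 2 ≤
      Fintype.card ι * (Fintype.card ι - 1) * Fintype.card β ^ Fintype.card ι := by
  have hsub : ({j : ι → β | (∃ t, j t = b) ∧ ∃ s, j s = b'} : Finset _) ⊆
      univ.offDiag.biUnion fun p => {j : ι → β | j p.1 = b ∧ j p.2 = b'} := by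
    rintro j hj
    obtain ⟨⟨t, rfl⟩, s, rfl⟩ := (mem_filter.mp hj).2
    simp only [mem_biUnion, mem_offDiag, mem_univ, true_and, mem_filter]
    exact ⟨(t, s), fun hts => hbb' (congrArg j hts), rfl, rfl⟩
  calc #{j : ι → β | (∃ t, j t = b) ∧ ∃ s, j s = b'} * Fintype.card β ^ 2
      ≤ ∑ p ∈ univ.offDiag, #{j : ι → β | j p.1 = b ∧ j p.2 = b'} * Fintype.card β ^ 2 := by
        rw [← sum_mul]; gcongr; exact (card_le_card hsub).trans card_biUnion_le
    _ = #(univ : Finset ι).offDiag * Fintype.card β ^ Fintype.card ι :=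
        sum_const_nat fun _ hp =>
          card_filter_apply_eq_and_apply_eq_mul (mem_offDiag.mp hp).2.2 b b'
    _ = Fintype.card ι * (Fintype.card ι - 1) * Fintype.card β ^ Fintype.card ι := by
        rw [offDiag_card, card_univ, Nat.mul_sub_one]

end Counting

section VStatistic

variable {𝒳 : Type*} {n m : ℕ}

lemma comp_update_eq_of_not_exists_eq (g : (Fin m → 𝒳) → ℝ) (j : Fin m → Fin n) {k : Fin n}
    (hk : ¬∃ t, j t = k) (x : Fin n → 𝒳) (w : 𝒳) :
    g (fun t => update x k w (j t)) = g fun t => x (j t) := by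
  push Not at hk
  simp only [update_of_ne (hk _)]

lemma partialDiff_comp_le (g : (Fin m → 𝒳) → ℝ) {c : ℝ} (hg : ∀ v, |g v| ≤ c)
    (j : Fin m → Fin n) (k : Fin n) (y y' : 𝒳) (x : Fin n → 𝒳) :
    partialDiff (fun x => g fun t => x (j t)) k y y' x ≤ if ∃ t, j t = k then 2 * c else 0 := by
  have hgj : ∀ x : Fin n → 𝒳, |g fun t => x (j t)| ≤ c := fun x => hg _
  split_ifs with hk
  · exact (le_abs_self _).trans (abs_partialDiff_le hgj k y y' x)
  · exact (partialDiff_eq_zero_of_update_eq (comp_update_eq_of_not_exists_eq g j hk) y y' x).le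

lemma partialDiff_partialDiff_comp_le (g : (Fin m → 𝒳) → ℝ) {c : ℝ} (hg : ∀ v, |g v| ≤ c)
    (j : Fin m → Fin n) {k l : Fin n} (hlk : l ≠ k) (y y' z z' : 𝒳) (x : Fin n → 𝒳) :
    partialDiff (partialDiff (fun x => g fun t => x (j t)) k y y') l z z' x ≤
      if (∃ t, j t = k) ∧ ∃ s, j s = l then 4 * c else 0 := by
  have hgj : ∀ x : Fin n → 𝒳, |g fun t => x (j t)| ≤ c := fun x => hg _
  split_ifs with hkl
  · exact (le_abs_self _).trans
      ((abs_partialDiff_le (abs_partialDiff_le hgj k y y') l z z' x).trans_eq (by ring))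
  · refine (partialDiff_eq_zero_of_update_eq (fun x w => ?_) z z' x).le
    rcases not_and_or.mp hkl with hk | hl
    · have hk0 := partialDiff_eq_zero_of_update_eq (f := fun x : Fin n → 𝒳 => g fun t => x (j t))
        (comp_update_eq_of_not_exists_eq g j hk) y y'
      rw [hk0, hk0]
    · exact partialDiff_update_eq hlk (comp_update_eq_of_not_exists_eq g j hl) y y' x w


noncomputable def vStatistic (κ : (Fin m → Fin n) → (Fin m → 𝒳) → ℝ) (x : Fin n → 𝒳) : ℝ :=
  1 / (n : ℝ) ^ m * ∑ j : Fin m → Fin n, κ j fun t => x (j t)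

variable {κ : (Fin m → Fin n) → (Fin m → 𝒳) → ℝ}

lemma partialDiff_vStatistic_le (hn : 0 < n) (hκ : ∀ j v, |κ j v| ≤ 1) (k : Fin n) (y y' : 𝒳)
    (x : Fin n → 𝒳) : partialDiff (vStatistic κ) k y y' x ≤ 2 * m / n := by
  have hcount : (#{j : Fin m → Fin n | ∃ t, j t = k} : ℝ) * n ≤ m * (n : ℝ) ^ m := by
    have := card_filter_exists_apply_eq_mul_le (ι := Fin m) k
    simp only [Fintype.card_fin] at this
    norm_cast
    -- the two sides decide `∃ t : Fin m, _` by different instances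
    convert this
  have hn' : (0 : ℝ) < n := by exact_mod_cast hn
  calc partialDiff (vStatistic κ) k y y' x
      = 1 / (n : ℝ) ^ m * ∑ j, partialDiff (fun x => κ j fun t => x (j t)) k y y' x :=
        congrFun (partialDiff_const_mul_sum _ _ _ k y y') x
    _ ≤ 1 / (n : ℝ) ^ m * ∑ j : Fin m → Fin n, if ∃ t, j t = k then 2 * 1 else 0 := by
        gcongr with j; exact partialDiff_comp_le _ (hκ j) j k y y' x
    _ = 2 * #{j : Fin m → Fin n | ∃ t, j t = k} / (n : ℝ) ^ m := by
        rw [sum_ite, sum_const_zero, sum_const, nsmul_eq_mul]; ring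
    _ ≤ 2 * m / n := by
        rw [div_le_div_iff₀ (by positivity) hn']; nlinarith

lemma partialDiff_partialDiff_vStatistic_le (hn : 0 < n) (hκ : ∀ j v, |κ j v| ≤ 1) {k l : Fin n}
    (hlk : l ≠ k) (y y' z z' : 𝒳) (x : Fin n → 𝒳) :
    partialDiff (partialDiff (vStatistic κ) k y y') l z z' x ≤ 4 * m * (m - 1) / n ^ 2 := by
  have hcount : (#{j : Fin m → Fin n | (∃ t, j t = k) ∧ ∃ s, j s = l} : ℝ) * n ^ 2 ≤
      m * (m - 1) * (n : ℝ) ^ m := by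
    have := card_filter_exists_apply_eq_and_exists_apply_eq_mul_le (ι := Fin m) hlk.symm
    simp only [Fintype.card_fin] at this
    have hcast : ((m * (m - 1) : ℕ) : ℝ) = m * ((m : ℝ) - 1) := by
      rcases m with _ | m <;> simp
    rw [← hcast]
    norm_cast
    convert this
  have hn' : (0 : ℝ) < n := by exact_mod_cast hn
  calc partialDiff (partialDiff (vStatistic κ) k y y') l z z' x
      = 1 / (n : ℝ) ^ m * ∑ j, partialDiff
          (partialDiff (fun x => κ j fun t => x (j t)) k y y') l z z' x := by
        unfold vStatistic
        rw [partialDiff_const_mul_sum, partialDiff_const_mul_sum]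
    _ ≤ 1 / (n : ℝ) ^ m * ∑ j : Fin m → Fin n,
          if (∃ t, j t = k) ∧ ∃ s, j s = l then 4 * 1 else 0 := by
        gcongr with j; exact partialDiff_partialDiff_comp_le _ (hκ j) j hlk y y' z z' x
    _ = 4 * #{j : Fin m → Fin n | (∃ t, j t = k) ∧ ∃ s, j s = l} / (n : ℝ) ^ m := by
        rw [sum_ite, sum_const_zero, sum_const, nsmul_eq_mul]; ring
    _ ≤ 4 * m * (m - 1) / n ^ 2 := by
        rw [div_le_div_iff₀ (by positivity) (by positivity)]; nlinarith

end VStatistic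

theorem Vstatistic_weak_interactions_general {𝒳 : Type*}
    {n m : ℕ} (hmn : m < n)
    (κ : (Fin m → Fin n) → (Fin m → 𝒳) → ℝ)
    (hκbd : ∀ j v, κ j v ∈ Set.Icc (-1 : ℝ) 1) :
    Msem (fun x : Fin n → 𝒳 =>
        (1 / (n : ℝ) ^ m) * ∑ j : Fin m → Fin n, κ j fun t => x (j t)) ≤ 2 * m / n ∧
      Jsem (fun x : Fin n → 𝒳 =>
        (1 / (n : ℝ) ^ m) * ∑ j : Fin m → Fin n, κ j fun t => x (j t)) ≤
        4 * m * ((m : ℝ) - 1) / n := by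
  have hn : 0 < n := Nat.zero_lt_of_lt hmn
  have hκ : ∀ j v, |κ j v| ≤ 1 := fun j v => abs_le.mpr (hκbd j v)
  have hm : 0 ≤ 4 * m * ((m : ℝ) - 1) := by rcases m with _ | m <;> simp; positivity
  refine ⟨Msem_le (by positivity) (partialDiff_vStatistic_le hn hκ), ?_⟩
  calc Jsem (vStatistic κ)
      ≤ n * (4 * m * (m - 1) / n ^ 2) :=
        Jsem_le (div_nonneg hm (by positivity))
          fun _ _ => partialDiff_partialDiff_vStatistic_le hn hκ
    _ = 4 * m * ((m : ℝ) - 1) / n := by field_simp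

/-- V-statistics have `(2m, 4m(m−1))`-weak interactions:
`M(V) ≤ 2m/n` and `J(V) ≤ 4m(m−1)/n`. -/
theorem Vstatistic_weak_interactions {𝒳 : Type*} [MeasurableSpace 𝒳] [Nonempty 𝒳]
    {n m : ℕ} (hm : 1 ≤ m) (hmn : m < n)
    (κ : (Fin m → Fin n) → (Fin m → 𝒳) → ℝ)
    (hκmeas : ∀ j, Measurable (κ j))
    (hκbd : ∀ j v, κ j v ∈ Set.Icc (-1 : ℝ) 1) :
    Msem (fun x : Fin n → 𝒳 =>
        (1 / (n : ℝ) ^ m) * ∑ j : Fin m → Fin n, κ j fun t => x (j t)) ≤ 2 * m / n ∧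
      Jsem (fun x : Fin n → 𝒳 =>
        (1 / (n : ℝ) ^ m) * ∑ j : Fin m → Fin n, κ j fun t => x (j t)) ≤
        4 * m * ((m : ℝ) - 1) / n :=
  Vstatistic_weak_interactions_general hmn κ hκbd
end

section
/- Let F : [0,1] → ℝ be Lipschitz with supremum norm ‖F‖_∞ and Lipschitz constant ‖F‖_Lip, and define the L-statistic f : [0,1]ⁿ → ℝ by f(x) = (1/n) Σ_{i=1}ⁿ F(i/n)·x_{(i)}, where x_{(1)} ≤ … ≤ x_{(n)} is the order statistic of x. Then for all x ∈ [0,1]ⁿ, all k ≠ l and all y, y', z, z' ∈ [0,1]: |D^k_{y,y'} f(x)| ≤ ‖F‖_∞ · diam([[y,y']])/n and |D^l_{z,z'} D^k_{y,y'} f(x)| ≤ ‖F‖_Lip · diam([[z,z']] ∩ [[y,y']])/n², where [[α,β]] denotes the closed interval [min{α,β}, max{α,β}] and diam denotes its length. -/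
/-! Layer cake. Writing each order statistic as `x₍ᵢ₎ = ∫₀¹ 1[t < x₍ᵢ₎] dt` turns the L-statistic
into `∫₀¹ G(N_x(t)) dt`, where `N_x(t)` counts the coordinates above level `t` and `G(m)` is the
sum of the `m` largest weights. Moving coordinate `k` from `y'` to `y` changes `N_x(t)` by one
exactly for `t` between `y` and `y'`, so the integrand changes by a single weight there and not
at all elsewhere. A mixed difference in coordinates `k ≠ l` vanishes unless both counts move,
i.e. outside `[[z,z']] ∩ [[y,y']]`; inside it is a second difference of `G`, the difference of
two consecutive weights `F(i/n) - F((i+1)/n)`, of size at most `‖F‖_Lip / n`. -/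

open MeasureTheory ProbabilityTheory

open Set Function
open scoped Finset

lemma Finset.card_filter_update {ι β : Type*} [DecidableEq ι] (p : β → Prop) [DecidablePred p]
    {S : Finset ι} {k : ι} (hk : k ∈ S) (w : ι → β) (b : β) :
    #{j ∈ S | p (update w k b j)} = #{j ∈ S.erase k | p (w j)} + if p b then 1 else 0 := by
  rw [Finset.card_filter, Finset.card_filter, ← Finset.add_sum_erase S _ hk, add_comm,
    update_self]
  congr 1
  refine Finset.sum_congr rfl fun j hj => ?_
  rw [update_of_ne (Finset.ne_of_mem_erase hj)]

lemma abs_sub_le_mul_indicator_uIcc (G : ℕ → ℝ) (m : ℕ) (t y y' : ℝ) :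
    |G (m + if t < y then 1 else 0) - G (m + if t < y' then 1 else 0)|
      ≤ |G (m + 1) - G m| * (uIcc y y').indicator 1 t := by
  have hind : 0 ≤ (uIcc y y').indicator (1 : ℝ → ℝ) t := indicator_nonneg (fun _ _ => zero_le_one) t
  by_cases hy : t < y <;> by_cases hy' : t < y' <;>
    simp only [hy, hy', if_true, if_false, add_zero, sub_self, abs_zero]
  · positivity
  · rw [indicator_of_mem (mem_uIcc.2 (Or.inr ⟨not_lt.1 hy', hy.le⟩)), Pi.one_apply, mul_one]
  · rw [indicator_of_mem (mem_uIcc.2 (Or.inl ⟨not_lt.1 hy, hy'.le⟩)), Pi.one_apply, mul_one,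
      abs_sub_comm]
  · positivity

lemma abs_second_diff_le_mul_indicator_inter (G : ℕ → ℝ) (m : ℕ) (t y y' z z' : ℝ) :
    |G (m + (if t < z then 1 else 0) + if t < y then 1 else 0)
        - G (m + (if t < z then 1 else 0) + if t < y' then 1 else 0)
        - (G (m + (if t < z' then 1 else 0) + if t < y then 1 else 0)
          - G (m + (if t < z' then 1 else 0) + if t < y' then 1 else 0))|
      ≤ |G (m + 2) - G (m + 1) - (G (m + 1) - G m)| * (uIcc z z' ∩ uIcc y y').indicator 1 t := by
  set δy : ℕ := if t < y then 1 else 0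
  set δy' : ℕ := if t < y' then 1 else 0
  -- the mixed difference is a first difference in `z` of a first difference in `y`
  have hz := abs_sub_le_mul_indicator_uIcc (fun p => G (p + δy) - G (p + δy')) m t z z'
  have hy := abs_sub_le_mul_indicator_uIcc (fun p => G (p + 1) - G p) m t y y'
  have hyz : G (m + 1 + δy) - G (m + 1 + δy') - (G (m + δy) - G (m + δy'))
      = G (m + δy + 1) - G (m + δy) - (G (m + δy' + 1) - G (m + δy')) := by
    rw [add_right_comm m 1 δy, add_right_comm m 1 δy']; ring
  rw [inter_indicator_one, Pi.mul_apply, mul_comm ((uIcc z z').indicator 1 t), ← mul_assoc]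
  refine hz.trans (mul_le_mul_of_nonneg_right ?_ (indicator_nonneg (fun _ _ => zero_le_one) t))
  rw [hyz]
  exact hy

lemma partialDiff_const_mul {𝒳 : Type*} {n : ℕ} (c : ℝ) (g : (Fin n → 𝒳) → ℝ) (k : Fin n)
    (y y' : 𝒳) : partialDiff (fun w => c * g w) k y y' = fun w => c * partialDiff g k y y' w := by
  ext w; simp only [partialDiff, mul_sub]

section IntegralRepresentation

variable {α 𝒳 : Type*} [MeasurableSpace α] {μ : Measure α} {n : ℕ} {A : Set 𝒳}
  {f : (Fin n → 𝒳) → ℝ} {ψ : α → (Fin n → 𝒳) → ℝ}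

lemma update_mem_of_forall_mem {w : Fin n → 𝒳} (hw : ∀ j, w j ∈ A) (k : Fin n) {y : 𝒳}
    (hy : y ∈ A) (j : Fin n) : update w k y j ∈ A :=
  (forall_update_iff w fun _ v => v ∈ A).2 ⟨hy, fun j _ => hw j⟩ j

lemma partialDiff_eq_integral (hf : ∀ w, (∀ j, w j ∈ A) → f w = ∫ t, ψ t w ∂μ)
    (hψ : ∀ w, (∀ j, w j ∈ A) → Integrable (fun t => ψ t w) μ) (k : Fin n) {y y' : 𝒳}
    (hy : y ∈ A) (hy' : y' ∈ A) {w : Fin n → 𝒳} (hw : ∀ j, w j ∈ A) :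
    partialDiff f k y y' w = ∫ t, partialDiff (ψ t) k y y' w ∂μ := by
  have hwy := update_mem_of_forall_mem hw k hy
  have hwy' := update_mem_of_forall_mem hw k hy'
  rw [partialDiff, hf _ hwy, hf _ hwy', ← integral_sub (hψ _ hwy) (hψ _ hwy')]
  rfl

lemma integrable_partialDiff (hψ : ∀ w, (∀ j, w j ∈ A) → Integrable (fun t => ψ t w) μ)
    (k : Fin n) {y y' : 𝒳} (hy : y ∈ A) (hy' : y' ∈ A) {w : Fin n → 𝒳} (hw : ∀ j, w j ∈ A) :
    Integrable (fun t => partialDiff (ψ t) k y y' w) μ :=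
  (hψ _ (update_mem_of_forall_mem hw k hy)).sub (hψ _ (update_mem_of_forall_mem hw k hy'))

end IntegralRepresentation

lemma abs_setIntegral_le_of_abs_le_indicator {α : Type*} [MeasurableSpace α] {μ : Measure α}
    {φ : α → ℝ} {I S : Set α} (hS : MeasurableSet S) (hSI : S ⊆ I) (hμS : μ S ≠ ⊤) {C : ℝ}
    (hφ : ∀ t, |φ t| ≤ C * S.indicator 1 t) : |∫ t in I, φ t ∂μ| ≤ C * μ.real S := by
  have hint : Integrable (fun t => C * S.indicator 1 t) (μ.restrict I) :=
    ((integrable_indicator_iff hS).2 (integrableOn_const (by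
      rwa [Measure.restrict_apply hS, inter_eq_left.2 hSI]))).const_mul C
  calc |∫ t in I, φ t ∂μ| ≤ ∫ t in I, C * S.indicator 1 t ∂μ :=
        norm_integral_le_of_norm_le hint (.of_forall fun t => (Real.norm_eq_abs _).trans_le (hφ t))
    _ = C * μ.real S := by
        rw [integral_const_mul, integral_indicator_one hS, measureReal_restrict_apply hS,
          inter_eq_left.2 hSI]

section LayerCake

variable {n : ℕ}

noncomputable def lStatistic (a : ℕ → ℝ) (w : Fin n → ℝ) : ℝ :=
  ∑ i : Fin n, a i * w (Tuple.sort w i)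

noncomputable def countAbove (w : Fin n → ℝ) (t : ℝ) : ℕ := #{j | t < w j}

def topSum (a : ℕ → ℝ) (n m : ℕ) : ℝ := ∑ i ∈ Finset.Ico (n - m) n, a i

lemma topSum_succ (a : ℕ → ℝ) {m : ℕ} (hm : m < n) :
    topSum a n (m + 1) = a (n - (m + 1)) + topSum a n m := by
  rw [topSum, Finset.sum_eq_sum_Ico_succ_bot (by omega), topSum,
    show n - (m + 1) + 1 = n - m by omega]

lemma countAbove_comp_perm (w : Fin n → ℝ) (σ : Equiv.Perm (Fin n)) (t : ℝ) :
    countAbove (w ∘ σ) t = countAbove w t := by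
  simp only [countAbove, Finset.card_filter, Function.comp_apply]
  exact Equiv.sum_comp σ fun j => if t < w j then 1 else 0

lemma Monotone.lt_iff_sub_countAbove_le {s : Fin n → ℝ} (hs : Monotone s) (t : ℝ) (i : Fin n) :
    t < s i ↔ n - countAbove s t ≤ i := by
  have hcard : countAbove s t ≤ n := (Finset.card_filter_le _ _).trans (by simp)
  constructor
  · intro h
    have hsub : Finset.Ici i ⊆ ({j | t < s j} : Finset (Fin n)) := fun j hj =>
      Finset.mem_filter.2 ⟨Finset.mem_univ _, h.trans_le (hs (Finset.mem_Ici.1 hj))⟩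
    have := Finset.card_le_card hsub
    rw [Fin.card_Ici] at this
    rw [countAbove]
    omega
  · intro h
    by_contra h'
    have hsub : ({j | t < s j} : Finset (Fin n)) ⊆ Finset.Ioi i := fun j hj =>
      Finset.mem_Ioi.2 <| lt_of_not_ge fun hji =>
        h' ((Finset.mem_filter.1 hj).2.trans_le (hs hji))
    have := Finset.card_le_card hsub
    rw [Fin.card_Ioi] at this
    rw [countAbove] at h
    omega

lemma topSum_countAbove (a : ℕ → ℝ) (w : Fin n → ℝ) (t : ℝ) :
    topSum a n (countAbove w t)
      = ∑ i : Fin n, a i * (Iio (w (Tuple.sort w i))).indicator 1 t := by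
  have hs := Tuple.monotone_sort w
  rw [← countAbove_comp_perm w (Tuple.sort w)]
  calc topSum a n (countAbove (w ∘ Tuple.sort w) t)
      = ∑ i ∈ Finset.range n, if n - countAbove (w ∘ Tuple.sort w) t ≤ i then a i else 0 := by
        rw [topSum, ← Finset.sum_filter]
        congr 1
        ext i
        simp only [Finset.mem_Ico, Finset.mem_filter, Finset.mem_range]
        omega
    _ = ∑ i : Fin n, if n - countAbove (w ∘ Tuple.sort w) t ≤ i then a i else 0 :=
        (Fin.sum_univ_eq_sum_range (fun i => if _ ≤ i then a i else 0) n).symm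
    _ = _ := by
        refine Finset.sum_congr rfl fun i _ => ?_
        simp only [← hs.lt_iff_sub_countAbove_le, Function.comp_apply, indicator_apply, mem_Iio,
          Pi.one_apply, mul_ite, mul_one, mul_zero]

lemma setIntegral_Icc_indicator_Iio {c : ℝ} (hc : c ∈ Icc (0 : ℝ) 1) :
    ∫ t in Icc (0 : ℝ) 1, (Iio c).indicator 1 t = c := by
  rw [integral_indicator_one measurableSet_Iio, measureReal_restrict_apply measurableSet_Iio,
    show Iio c ∩ Icc 0 1 = Ico 0 c by
      ext t; simp only [mem_inter_iff, mem_Iio, mem_Icc, mem_Ico]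
      exact ⟨fun h => ⟨h.2.1, h.1⟩, fun h => ⟨h.2, h.1, h.2.le.trans hc.2⟩⟩,
    Real.volume_real_Ico_of_le hc.1, sub_zero]

/-- Layer cake: `w₍ᵢ₎ = ∫₀¹ 1[t < w₍ᵢ₎] dt`, and at each level `t` the order statistics above `t`
are the last `countAbove w t` ones. -/
lemma lStatistic_eq_setIntegral (a : ℕ → ℝ) {w : Fin n → ℝ} (hw : ∀ j, w j ∈ Icc (0 : ℝ) 1) :
    lStatistic a w = ∫ t in Icc (0 : ℝ) 1, topSum a n (countAbove w t) := by
  simp_rw [lStatistic, topSum_countAbove]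
  rw [integral_finsetSum]
  · simp_rw [integral_const_mul, setIntegral_Icc_indicator_Iio (hw _)]
  · exact fun i _ => ((integrable_indicator_iff measurableSet_Iio).2
      (integrableOn_const (measure_ne_top _ _))).const_mul _

lemma integrableOn_topSum_countAbove (a : ℕ → ℝ) (w : Fin n → ℝ) :
    IntegrableOn (fun t => topSum a n (countAbove w t)) (Icc (0 : ℝ) 1) := by
  simp_rw [topSum_countAbove]
  exact integrable_finsetSum _ fun i _ => ((integrable_indicator_iff measurableSet_Iio).2
      (integrableOn_const (measure_ne_top _ _))).const_mul _

end LayerCake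

section Bounds

variable {n : ℕ} (a : ℕ → ℝ) {x : Fin n → ℝ} {y y' : ℝ}

lemma partialDiff_lStatistic_eq_setIntegral (hx : ∀ j, x j ∈ Icc (0 : ℝ) 1)
    (hy : y ∈ Icc (0 : ℝ) 1) (hy' : y' ∈ Icc (0 : ℝ) 1) (k : Fin n) :
    partialDiff (lStatistic a) k y y' x
      = ∫ t in Icc (0 : ℝ) 1, partialDiff (fun w => topSum a n (countAbove w t)) k y y' x :=
  partialDiff_eq_integral (fun _ hw => lStatistic_eq_setIntegral a hw)
    (fun w _ => integrableOn_topSum_countAbove a w) k hy hy' hx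

theorem abs_partialDiff_lStatistic_le (hx : ∀ j, x j ∈ Icc (0 : ℝ) 1) (hy : y ∈ Icc (0 : ℝ) 1)
    (hy' : y' ∈ Icc (0 : ℝ) 1) {B : ℝ} (ha : ∀ i < n, |a i| ≤ B) (k : Fin n) :
    |partialDiff (lStatistic a) k y y' x| ≤ B * |y - y'| := by
  rw [partialDiff_lStatistic_eq_setIntegral a hx hy hy', abs_sub_comm,
    ← Real.volume_real_interval]
  refine abs_setIntegral_le_of_abs_le_indicator measurableSet_uIcc (uIcc_subset_Icc hy hy')
    isCompact_uIcc.measure_lt_top.ne fun t => ?_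
  set m := #{j ∈ Finset.univ.erase k | t < x j}
  have hm : m + 1 ≤ n := by
    have := Finset.card_filter_le (Finset.univ.erase k) (fun j => t < x j)
    rw [Finset.card_erase_of_mem (Finset.mem_univ k), Finset.card_univ, Fintype.card_fin] at this
    have := k.pos
    omega
  have hcount (v : ℝ) : countAbove (update x k v) t = m + if t < v then 1 else 0 :=
    Finset.card_filter_update (t < ·) (Finset.mem_univ k) x v
  calc |partialDiff (fun w => topSum a n (countAbove w t)) k y y' x|
      = |topSum a n (m + if t < y then 1 else 0) - topSum a n (m + if t < y' then 1 else 0)| := by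
        simp only [partialDiff, hcount]
    _ ≤ |topSum a n (m + 1) - topSum a n m| * (uIcc y y').indicator 1 t :=
        abs_sub_le_mul_indicator_uIcc _ _ _ _ _
    _ ≤ B * (uIcc y y').indicator 1 t := by
        rw [topSum_succ a hm, add_sub_cancel_right]
        exact mul_le_mul_of_nonneg_right (ha _ (by omega))
          (indicator_nonneg (fun _ _ => zero_le_one) t)

theorem abs_partialDiff_partialDiff_lStatistic_le (hx : ∀ j, x j ∈ Icc (0 : ℝ) 1)
    (hy : y ∈ Icc (0 : ℝ) 1) (hy' : y' ∈ Icc (0 : ℝ) 1) {L : ℝ}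
    (ha : ∀ i, i + 1 < n → |a (i + 1) - a i| ≤ L) {k l : Fin n} (hkl : k ≠ l) {z z' : ℝ}
    (hz : z ∈ Icc (0 : ℝ) 1) (hz' : z' ∈ Icc (0 : ℝ) 1) :
    |partialDiff (partialDiff (lStatistic a) k y y') l z z' x|
      ≤ L * volume.real (uIcc z z' ∩ uIcc y y') := by
  rw [partialDiff_eq_integral (fun _ hw => partialDiff_lStatistic_eq_setIntegral a hw hy hy' k)
    (fun _ hw => integrable_partialDiff (fun w _ => integrableOn_topSum_countAbove a w)
      k hy hy' hw) l hz hz' hx]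
  refine abs_setIntegral_le_of_abs_le_indicator (measurableSet_uIcc.inter measurableSet_uIcc)
    (inter_subset_right.trans (uIcc_subset_Icc hy hy'))
    (ne_top_of_le_ne_top isCompact_uIcc.measure_lt_top.ne (measure_mono inter_subset_right))
    fun t => ?_
  set m := #{j ∈ (Finset.univ.erase k).erase l | t < x j}
  have hl : l ∈ Finset.univ.erase k := Finset.mem_erase.2 ⟨hkl.symm, Finset.mem_univ l⟩
  have hm : m + 2 ≤ n := by
    have := Finset.card_filter_le ((Finset.univ.erase k).erase l) (fun j => t < x j)
    rw [Finset.card_erase_of_mem hl, Finset.card_erase_of_mem (Finset.mem_univ k),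
      Finset.card_univ, Fintype.card_fin] at this
    have := k.pos
    have : (k : ℕ) ≠ l := Fin.val_ne_of_ne hkl
    omega
  have hcount (u v : ℝ) : countAbove (update (update x l u) k v) t
      = m + (if t < u then 1 else 0) + if t < v then 1 else 0 := by
    rw [countAbove, Finset.card_filter_update (t < ·) (Finset.mem_univ k),
      Finset.card_filter_update (t < ·) hl]
  have hsecond : topSum a n (m + 2) - topSum a n (m + 1) - (topSum a n (m + 1) - topSum a n m)
      = a (n - (m + 2)) - a (n - (m + 2) + 1) := by
    rw [topSum_succ a (m := m + 1) (by omega), topSum_succ a (m := m) (by omega),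
      show n - (m + 1) = n - (m + 2) + 1 by omega]
    ring
  calc |partialDiff (partialDiff (fun w => topSum a n (countAbove w t)) k y y') l z z' x|
      = |topSum a n (m + (if t < z then 1 else 0) + if t < y then 1 else 0)
          - topSum a n (m + (if t < z then 1 else 0) + if t < y' then 1 else 0)
          - (topSum a n (m + (if t < z' then 1 else 0) + if t < y then 1 else 0)
            - topSum a n (m + (if t < z' then 1 else 0) + if t < y' then 1 else 0))| := by
        simp only [partialDiff, hcount]
    _ ≤ |topSum a n (m + 2) - topSum a n (m + 1) - (topSum a n (m + 1) - topSum a n m)|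
          * (uIcc z z' ∩ uIcc y y').indicator 1 t :=
        abs_second_diff_le_mul_indicator_inter _ _ _ _ _ _ _
    _ ≤ L * (uIcc z z' ∩ uIcc y y').indicator 1 t := by
        rw [hsecond, abs_sub_comm]
        exact mul_le_mul_of_nonneg_right (ha _ (by omega))
          (indicator_nonneg (fun _ _ => zero_le_one) t)

end Bounds

lemma volume_real_uIcc_inter_uIcc (z z' y y' : ℝ) :
    volume.real (uIcc z z' ∩ uIcc y y')
      = max 0 (min (max z z') (max y y') - max (min z z') (min y y')) := by
  rw [uIcc, uIcc, Icc_inter_Icc, Real.volume_real_Icc, max_comm]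

/-- Theorem 9 (Lipschitz L-statistics, pointwise bounds): for
`f(x) = (1/n) Σ_i F(i/n)·x_{(i)}` and coordinates in `[0,1]`,
`|D^k_{y,y'}f(x)| ≤ ‖F‖_∞·diam([[y,y']])/n` and
`|D^l_{z,z'}D^k_{y,y'}f(x)| ≤ ‖F‖_Lip·diam([[z,z']] ∩ [[y,y']])/n²`. -/
theorem Lstatistic_pointwise_bounds {n : ℕ} (F : ℝ → ℝ) (Fsup FLip : ℝ)
    (hFsup : ∀ t ∈ Set.Icc (0 : ℝ) 1, |F t| ≤ Fsup)
    (hFlip : ∀ s ∈ Set.Icc (0 : ℝ) 1, ∀ t ∈ Set.Icc (0 : ℝ) 1, |F s - F t| ≤ FLip * |s - t|)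
    (f : (Fin n → ℝ) → ℝ)
    (hf : f = fun x => (1 / (n : ℝ)) *
      ∑ i : Fin n, F (((i : ℕ) + 1) / n) * x (Tuple.sort x i))
    (x : Fin n → ℝ) (hx : ∀ i, x i ∈ Set.Icc (0 : ℝ) 1)
    (k l : Fin n) (hkl : k ≠ l)
    (y y' z z' : ℝ) (hy : y ∈ Set.Icc (0 : ℝ) 1) (hy' : y' ∈ Set.Icc (0 : ℝ) 1)
    (hz : z ∈ Set.Icc (0 : ℝ) 1) (hz' : z' ∈ Set.Icc (0 : ℝ) 1) :
    |partialDiff f k y y' x| ≤ Fsup * |y - y'| / n ∧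
      |partialDiff (partialDiff f k y y') l z z' x| ≤
        FLip * max 0 (min (max z z') (max y y') - max (min z z') (min y y')) / n ^ 2 := by
  set a : ℕ → ℝ := fun i => F ((i + 1) / n)
  have hn : (0 : ℝ) < n := Nat.cast_pos.2 k.pos
  have hnode (i : ℕ) (hi : i < n) : ((i : ℝ) + 1) / n ∈ Icc (0 : ℝ) 1 :=
    ⟨by positivity, (div_le_one hn).2 (by exact_mod_cast hi)⟩
  have hsup (i : ℕ) (hi : i < n) : |a i| ≤ Fsup := hFsup _ (hnode i hi)
  have hlip (i : ℕ) (hi : i + 1 < n) : |a (i + 1) - a i| ≤ FLip / n := by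
    have h := hFlip _ (hnode (i + 1) hi) _ (hnode i (by omega))
    rw [Nat.cast_succ, show ((i : ℝ) + 1 + 1) / n - (i + 1) / n = 1 / n by ring,
      abs_of_pos (one_div_pos.2 hn), mul_one_div] at h
    simpa only [a, Nat.cast_succ] using h
  have hf' : f = fun w => 1 / (n : ℝ) * lStatistic a w := hf
  simp only [hf', partialDiff_const_mul, abs_mul, abs_of_pos (one_div_pos.2 hn)]
  constructor
  · calc 1 / (n : ℝ) * |partialDiff (lStatistic a) k y y' x| ≤ 1 / n * (Fsup * |y - y'|) := by
          gcongr; exact abs_partialDiff_lStatistic_le a hx hy hy' hsup k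
      _ = Fsup * |y - y'| / n := by ring
  · rw [← volume_real_uIcc_inter_uIcc]
    calc 1 / (n : ℝ) * |partialDiff (partialDiff (lStatistic a) k y y') l z z' x|
        ≤ 1 / n * (FLip / n * volume.real (uIcc z z' ∩ uIcc y y')) := by
          gcongr; exact abs_partialDiff_partialDiff_lStatistic_le a hx hy hy' hlip hkl hz hz'
      _ = FLip * volume.real (uIcc z z' ∩ uIcc y y') / n ^ 2 := by ring
end

section
/- Let (Ω, ρ) be a finite measure space with ρ(Ω) > 0 and β > 0. Define Ξ on the closed unit ball 𝔹₁ of L^∞(Ω, ρ) by Ξ(G) = ln ∫_Ω e^{−β·G(ω)} dρ(ω). Then Ξ is twice Fréchet-differentiable on 𝔹₁ with Ξ′(G)[u] = −β·E_G[u] and Ξ″(G)[u][v] = β²·(E_G[u·v] − E_G[u]·E_G[v]), where E_G[h] = Z(G)^{−1} ∫_Ω h(ω)·e^{−β·G(ω)} dρ(ω) and Z(G) = ∫_Ω e^{−β·G(ω)} dρ(ω); consequently ‖Ξ′(G)‖ ≤ β and ‖Ξ″(G)‖ ≤ 2β² for every G ∈ 𝔹₁. -/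
open MeasureTheory ProbabilityTheory

/-- The partition function `Z(G) = ∫ e^{−βG} dρ` for `G ∈ L^∞(Ω,ρ)`. -/
noncomputable def gibbsZ {Ω : Type*} [MeasurableSpace Ω] (ρ : Measure Ω) (β : ℝ)
    (G : Lp ℝ ⊤ ρ) : ℝ :=
  ∫ ω, Real.exp (-β * G ω) ∂ρ

/-- The Gibbs expectation `E_G[h] = Z(G)⁻¹ ∫ h·e^{−βG} dρ`. -/
noncomputable def gibbsExp {Ω : Type*} [MeasurableSpace Ω] (ρ : Measure Ω) (β : ℝ)
    (G : Lp ℝ ⊤ ρ) (h : Ω → ℝ) : ℝ :=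
  (gibbsZ ρ β G)⁻¹ * ∫ ω, h ω * Real.exp (-β * G ω) ∂ρ

/-! Pointwise `|e^{a+b} − e^a − b e^a| ≤ e^a b²` for `|b| ≤ 1`, so `G ↦ e^{−βG}` is Fréchet
differentiable from `L^∞` into `L¹` with derivative `w ↦ −β w e^{−βG}` and a remainder of order
`‖w‖²`. Composing with the continuous linear maps `f ↦ ∫ f dρ` and `f ↦ (u ↦ ∫ u f dρ)`
differentiates `Z` and `J(G) = ∫ (·) e^{−βG} dρ`; then `Ξ′ = −β Z⁻¹ J` by the chain rule and `Ξ″`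
by the product rule. Both norm bounds come from `|E_G[h]| ≤ ess sup |h|`. -/

open scoped ENNReal
open Real

theorem MeasureTheory.Lp.ae_abs_le_norm_top {Ω : Type*} [MeasurableSpace Ω] {ρ : Measure Ω}
    (f : Lp ℝ ∞ ρ) : ∀ᵐ ω ∂ρ, |f ω| ≤ ‖f‖ := by
  filter_upwards [ae_le_eLpNormEssSup (f := (f : Ω → ℝ)) (μ := ρ)] with ω hω
  rw [← Real.norm_eq_abs, ← toReal_enorm, Lp.norm_def, eLpNorm_exponent_top]
  exact ENNReal.toReal_mono (by simpa using Lp.eLpNorm_ne_top f) hω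

theorem Real.abs_exp_add_sub_exp_sub_mul_exp_le (a : ℝ) {b : ℝ} (hb : |b| ≤ 1) :
    |exp (a + b) - exp a - b * exp a| ≤ exp a * b ^ 2 := by
  have : exp (a + b) - exp a - b * exp a = exp a * (exp b - 1 - b) := by rw [exp_add]; ring
  rw [this, abs_mul, abs_of_pos (exp_pos a)]
  exact mul_le_mul_of_nonneg_left (abs_exp_sub_one_sub_id_le hb) (exp_pos a).le

namespace Gibbs

variable {Ω : Type*} [MeasurableSpace Ω] {ρ : Measure Ω} (β : ℝ)

theorem ae_exp_neg_mul_le (G : Lp ℝ ∞ ρ) :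
    ∀ᵐ ω ∂ρ, exp (-β * G ω) ≤ exp (|β| * ‖G‖) := by
  filter_upwards [Lp.ae_abs_le_norm_top G] with ω hω
  refine exp_le_exp.2 ((le_abs_self _).trans ?_)
  rw [abs_mul, abs_neg]
  gcongr

theorem memLp_top_exp_neg_mul (G : Lp ℝ ∞ ρ) : MemLp (fun ω => exp (-β * G ω)) ∞ ρ :=
  memLp_top_of_bound
    (continuous_exp.comp_aestronglyMeasurable ((Lp.aestronglyMeasurable G).const_mul (-β)))
    _ ((ae_exp_neg_mul_le β G).mono fun ω hω => by rwa [norm_of_nonneg (exp_pos _).le])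

variable [IsFiniteMeasure ρ]

theorem integrable_exp_neg_mul (G : Lp ℝ ∞ ρ) : Integrable (fun ω => exp (-β * G ω)) ρ :=
  (memLp_top_exp_neg_mul β G).integrable le_top

noncomputable def gibbsWeight (G : Lp ℝ ∞ ρ) : Lp ℝ 1 ρ :=
  (integrable_exp_neg_mul β G).toL1 _

theorem coeFn_gibbsWeight (G : Lp ℝ ∞ ρ) :
    gibbsWeight β G =ᵐ[ρ] fun ω => exp (-β * G ω) :=
  Integrable.coeFn_toL1 _

theorem gibbsZ_eq_integralCLM (G : Lp ℝ ∞ ρ) :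
    gibbsZ ρ β G = L1.integralCLM (gibbsWeight β G) := by
  rw [← L1.integral_eq, L1.integral_eq_integral]
  exact integral_congr_ae (coeFn_gibbsWeight β G).symm

noncomputable def gibbsWeightDeriv (G : Lp ℝ ∞ ρ) : Lp ℝ ∞ ρ →L[ℝ] Lp ℝ 1 ρ :=
  (-β) • ((ContinuousLinearMap.mul ℝ ℝ).holderL ρ ∞ 1 1).flip (gibbsWeight β G)

theorem coeFn_gibbsWeightDeriv (G w : Lp ℝ ∞ ρ) :
    gibbsWeightDeriv β G w =ᵐ[ρ] fun ω => -β * w ω * exp (-β * G ω) := by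
  simp only [gibbsWeightDeriv, smul_apply, ContinuousLinearMap.flip_apply,
    ContinuousLinearMap.holderL_apply_apply]
  filter_upwards [Lp.coeFn_smul (-β) ((ContinuousLinearMap.mul ℝ ℝ).holder 1 w (gibbsWeight β G)),
    ContinuousLinearMap.coeFn_holder (r := 1) (ContinuousLinearMap.mul ℝ ℝ) w (gibbsWeight β G),
    coeFn_gibbsWeight β G] with ω h₁ h₂ h₃
  rw [h₁, Pi.smul_apply, h₂, h₃, smul_eq_mul, ContinuousLinearMap.mul_apply', mul_assoc]

theorem norm_gibbsWeight_sub_sub_le (G w : Lp ℝ ∞ ρ) (hw : |β| * ‖w‖ ≤ 1) :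
    ‖gibbsWeight β (G + w) - gibbsWeight β G - gibbsWeightDeriv β G w‖ ≤
      measureUnivNNReal ρ * (exp (|β| * ‖G‖) * β ^ 2) * ‖w‖ ^ 2 := by
  have hbound : ∀ᵐ ω ∂ρ, ‖(gibbsWeight β (G + w) - gibbsWeight β G - gibbsWeightDeriv β G w) ω‖
      ≤ exp (|β| * ‖G‖) * β ^ 2 * ‖w‖ ^ 2 := by
    filter_upwards [Lp.coeFn_sub (gibbsWeight β (G + w) - gibbsWeight β G) _,
      Lp.coeFn_sub (gibbsWeight β (G + w)) (gibbsWeight β G), Lp.coeFn_add G w,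
      coeFn_gibbsWeight β (G + w), coeFn_gibbsWeight β G, coeFn_gibbsWeightDeriv β G w,
      ae_exp_neg_mul_le β G, Lp.ae_abs_le_norm_top w] with ω h₁ h₂ h₃ h₄ h₅ h₆ hG hw'
    have hb : |-β * w ω| ≤ |β| * ‖w‖ := by
      rw [abs_mul, abs_neg]
      gcongr
    rw [h₁, Pi.sub_apply, h₂, Pi.sub_apply, h₄, h₅, h₆, h₃, Pi.add_apply, mul_add,
      Real.norm_eq_abs]
    calc _ ≤ exp (-β * G ω) * (-β * w ω) ^ 2 :=
          abs_exp_add_sub_exp_sub_mul_exp_le _ (hb.trans hw)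
      _ ≤ exp (|β| * ‖G‖) * (|β| * ‖w‖) ^ 2 := by
          rw [← sq_abs (-β * w ω)]
          gcongr
      _ = exp (|β| * ‖G‖) * β ^ 2 * ‖w‖ ^ 2 := by rw [mul_pow, sq_abs, mul_assoc]
  have := Lp.norm_le_of_ae_bound (by positivity) hbound
  simpa [mul_assoc] using this

theorem hasFDerivAt_gibbsWeight (G : Lp ℝ ∞ ρ) :
    HasFDerivAt (gibbsWeight β) (gibbsWeightDeriv β G) G := by
  rw [hasFDerivAt_iff_isLittleO_nhds_zero]
  refine Asymptotics.IsBigO.trans_isLittleO ?_ (Asymptotics.isLittleO_norm_pow_id one_lt_two)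
  refine Asymptotics.IsBigO.of_bound (measureUnivNNReal ρ * (exp (|β| * ‖G‖) * β ^ 2)) ?_
  filter_upwards [Metric.ball_mem_nhds (0 : Lp ℝ ∞ ρ) (by positivity : (0 : ℝ) < (|β| + 1)⁻¹)]
    with w hw
  rw [mem_ball_zero_iff] at hw
  have hβw : |β| * ‖w‖ ≤ 1 := by
    calc |β| * ‖w‖ ≤ (|β| + 1) * (|β| + 1)⁻¹ := by gcongr; linarith
      _ = 1 := mul_inv_cancel₀ (by positivity)
  simpa using norm_gibbsWeight_sub_sub_le β G w hβw

noncomputable def gibbsPairing (G : Lp ℝ ∞ ρ) : Lp ℝ ∞ ρ →L[ℝ] ℝ :=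
  ((ContinuousLinearMap.mul ℝ ℝ).lpPairing ρ ∞ 1).flip (gibbsWeight β G)

theorem gibbsPairing_apply (G u : Lp ℝ ∞ ρ) :
    gibbsPairing β G u = ∫ ω, u ω * exp (-β * G ω) ∂ρ := by
  rw [gibbsPairing, ContinuousLinearMap.flip_apply, ContinuousLinearMap.lpPairing_eq_integral]
  refine integral_congr_ae ?_
  filter_upwards [coeFn_gibbsWeight β G] with ω hω
  rw [ContinuousLinearMap.mul_apply', hω]

theorem hasFDerivAt_gibbsZ (G : Lp ℝ ∞ ρ) :
    HasFDerivAt (gibbsZ ρ β) (-β • gibbsPairing β G) G := by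
  have hD : L1.integralCLM ∘L gibbsWeightDeriv β G = -β • gibbsPairing β G := by
    ext1 u
    rw [ContinuousLinearMap.comp_apply, ← L1.integral_eq, L1.integral_eq_integral,
      integral_congr_ae (coeFn_gibbsWeightDeriv β G u), smul_apply, gibbsPairing_apply,
      smul_eq_mul, ← integral_const_mul]
    simp only [mul_assoc]
  rw [show gibbsZ ρ β = L1.integralCLM ∘ gibbsWeight β from funext (gibbsZ_eq_integralCLM β),
    ← hD]
  exact L1.integralCLM.hasFDerivAt.comp G (hasFDerivAt_gibbsWeight β G)

theorem hasFDerivAt_gibbsPairing (G : Lp ℝ ∞ ρ) :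
    ∃ J' : Lp ℝ ∞ ρ →L[ℝ] Lp ℝ ∞ ρ →L[ℝ] ℝ, HasFDerivAt (gibbsPairing β) J' G ∧
      ∀ u v, J' u v = -β * ∫ ω, u ω * v ω * exp (-β * G ω) ∂ρ := by
  set P := ((ContinuousLinearMap.mul ℝ ℝ).lpPairing ρ ∞ 1).flip
  refine ⟨P ∘L gibbsWeightDeriv β G, P.hasFDerivAt.comp G (hasFDerivAt_gibbsWeight β G),
    fun u v => ?_⟩
  rw [ContinuousLinearMap.comp_apply, ContinuousLinearMap.flip_apply,
    ContinuousLinearMap.lpPairing_eq_integral, ← integral_const_mul]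
  refine integral_congr_ae ?_
  filter_upwards [coeFn_gibbsWeightDeriv β G u] with ω hω
  rw [ContinuousLinearMap.mul_apply', hω]
  ring

theorem gibbsZ_pos (hρ : ρ ≠ 0) (G : Lp ℝ ∞ ρ) : 0 < gibbsZ ρ β G :=
  have : NeZero ρ := ⟨hρ⟩
  integral_exp_pos (integrable_exp_neg_mul β G)

theorem abs_gibbsExp_le (hρ : ρ ≠ 0) (G : Lp ℝ ∞ ρ) {h : Ω → ℝ} {M : ℝ}
    (hM : ∀ᵐ ω ∂ρ, |h ω| ≤ M) : |gibbsExp ρ β G h| ≤ M := by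
  have hZ := gibbsZ_pos β hρ G
  have hint : |∫ ω, h ω * exp (-β * G ω) ∂ρ| ≤ M * gibbsZ ρ β G := by
    rw [gibbsZ, ← integral_const_mul, ← Real.norm_eq_abs]
    refine norm_integral_le_of_norm_le ((integrable_exp_neg_mul β G).const_mul M) ?_
    filter_upwards [hM] with ω hω
    rw [norm_mul, norm_of_nonneg (exp_pos _).le, Real.norm_eq_abs]
    exact mul_le_mul_of_nonneg_right hω (exp_pos _).le
  rw [gibbsExp, abs_mul, abs_of_pos (inv_pos.2 hZ), inv_mul_le_iff₀ hZ]
  linarith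

theorem abs_gibbsExp_mul_sub_mul_le (hρ : ρ ≠ 0) (G u v : Lp ℝ ∞ ρ) :
    |gibbsExp ρ β G (fun ω => u ω * v ω) -
      gibbsExp ρ β G (fun ω => u ω) * gibbsExp ρ β G (fun ω => v ω)| ≤ 2 * (‖u‖ * ‖v‖) := by
  have hu := Lp.ae_abs_le_norm_top u
  have hv := Lp.ae_abs_le_norm_top v
  have huv : ∀ᵐ ω ∂ρ, |u ω * v ω| ≤ ‖u‖ * ‖v‖ := by
    filter_upwards [hu, hv] with ω hu hv
    rw [abs_mul]
    exact mul_le_mul hu hv (abs_nonneg _) (norm_nonneg u)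
  calc _ ≤ |gibbsExp ρ β G (fun ω => u ω * v ω)| +
        |gibbsExp ρ β G (fun ω => u ω)| * |gibbsExp ρ β G (fun ω => v ω)| := by
        rw [← abs_mul]; exact abs_sub _ _
    _ ≤ ‖u‖ * ‖v‖ + ‖u‖ * ‖v‖ := by
        gcongr
        · exact abs_gibbsExp_le β hρ G huv
        · exact abs_gibbsExp_le β hρ G hu
        · exact abs_gibbsExp_le β hρ G hv
    _ = 2 * (‖u‖ * ‖v‖) := by ring

noncomputable def freeEnergyDeriv (G : Lp ℝ ∞ ρ) : Lp ℝ ∞ ρ →L[ℝ] ℝ :=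
  (-β * (gibbsZ ρ β G)⁻¹) • gibbsPairing β G

theorem freeEnergyDeriv_apply (G u : Lp ℝ ∞ ρ) :
    freeEnergyDeriv β G u = -β * gibbsExp ρ β G (fun ω => u ω) := by
  rw [freeEnergyDeriv, smul_apply, gibbsPairing_apply, smul_eq_mul, gibbsExp, mul_assoc]

theorem norm_freeEnergyDeriv_le (hρ : ρ ≠ 0) (G : Lp ℝ ∞ ρ) : ‖freeEnergyDeriv β G‖ ≤ |β| := by
  refine ContinuousLinearMap.opNorm_le_bound _ (abs_nonneg β) fun u => ?_
  rw [freeEnergyDeriv_apply, Real.norm_eq_abs, abs_mul, abs_neg]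
  exact mul_le_mul_of_nonneg_left (abs_gibbsExp_le β hρ G (Lp.ae_abs_le_norm_top u))
    (abs_nonneg β)

theorem hasFDerivAt_log_gibbsZ (hρ : ρ ≠ 0) (G : Lp ℝ ∞ ρ) :
    HasFDerivAt (fun G' => log (gibbsZ ρ β G')) (freeEnergyDeriv β G) G := by
  refine ((hasDerivAt_log (gibbsZ_pos β hρ G).ne').comp_hasFDerivAt G
    (hasFDerivAt_gibbsZ β G)).congr_fderiv ?_
  rw [freeEnergyDeriv, smul_smul, mul_comm]

theorem hasFDerivAt_freeEnergyDeriv (hρ : ρ ≠ 0) (G : Lp ℝ ∞ ρ) :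
    ∃ Ξ'' : Lp ℝ ∞ ρ →L[ℝ] Lp ℝ ∞ ρ →L[ℝ] ℝ, HasFDerivAt (freeEnergyDeriv β) Ξ'' G ∧
      ∀ u v, Ξ'' u v = β ^ 2 * (gibbsExp ρ β G (fun ω => u ω * v ω) -
        gibbsExp ρ β G (fun ω => u ω) * gibbsExp ρ β G (fun ω => v ω)) := by
  have hZ := (gibbsZ_pos β hρ G).ne'
  obtain ⟨J', hJ', hJ'_apply⟩ := hasFDerivAt_gibbsPairing β G
  have hc := ((hasDerivAt_inv hZ).comp_hasFDerivAt G (hasFDerivAt_gibbsZ β G)).const_mul (-β)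
  refine ⟨_, hc.smul hJ', fun u v => ?_⟩
  simp only [add_apply, smul_apply, ContinuousLinearMap.smulRight_apply,
    hJ'_apply, gibbsPairing_apply, smul_eq_mul, gibbsExp, Function.comp_apply]
  field_simp
  ring

end Gibbs

/-- The free-energy functional `Ξ(G) = ln ∫ e^{−βG} dρ` is twice Fréchet-differentiable on the
unit ball of `L^∞(Ω,ρ)` with `Ξ′(G)[u] = −β E_G[u]`,
`Ξ″(G)[u][v] = β²(E_G[uv] − E_G[u]E_G[v])`, `‖Ξ′(G)‖ ≤ β` and `‖Ξ″(G)‖ ≤ 2β²`. -/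
theorem gibbs_free_energy_derivatives {Ω : Type*} [MeasurableSpace Ω] (ρ : Measure Ω)
    [IsFiniteMeasure ρ] (hρ : ρ ≠ 0) (β : ℝ) (hβ : 0 < β) :
    ∃ Ξ' : Lp ℝ ⊤ ρ → (Lp ℝ ⊤ ρ →L[ℝ] ℝ),
      ∃ Ξ'' : Lp ℝ ⊤ ρ → (Lp ℝ ⊤ ρ →L[ℝ] Lp ℝ ⊤ ρ →L[ℝ] ℝ),
        ∀ G ∈ Metric.closedBall (0 : Lp ℝ ⊤ ρ) 1,
          HasFDerivWithinAt (fun G' : Lp ℝ ⊤ ρ => Real.log (gibbsZ ρ β G')) (Ξ' G)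
              (Metric.closedBall 0 1) G ∧
            HasFDerivWithinAt Ξ' (Ξ'' G) (Metric.closedBall 0 1) G ∧
            (∀ u : Lp ℝ ⊤ ρ, Ξ' G u = -β * gibbsExp ρ β G (fun ω => u ω)) ∧
            (∀ u v : Lp ℝ ⊤ ρ, Ξ'' G u v =
              β ^ 2 * (gibbsExp ρ β G (fun ω => u ω * v ω) -
                gibbsExp ρ β G (fun ω => u ω) * gibbsExp ρ β G (fun ω => v ω))) ∧
            ‖Ξ' G‖ ≤ β ∧ ‖Ξ'' G‖ ≤ 2 * β ^ 2 := by
  choose Ξ'' hΞ'' hΞ''_apply using Gibbs.hasFDerivAt_freeEnergyDeriv β hρ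
  refine ⟨Gibbs.freeEnergyDeriv β, Ξ'', fun G _ =>
    ⟨(Gibbs.hasFDerivAt_log_gibbsZ β hρ G).hasFDerivWithinAt, (hΞ'' G).hasFDerivWithinAt,
      Gibbs.freeEnergyDeriv_apply β G, hΞ''_apply G, ?_, ?_⟩⟩
  · simpa only [abs_of_pos hβ] using Gibbs.norm_freeEnergyDeriv_le β hρ G
  · refine ContinuousLinearMap.opNorm_le_bound₂ _ (by positivity) fun u v => ?_
    rw [hΞ''_apply, norm_mul, norm_pow, Real.norm_eq_abs, Real.norm_eq_abs, sq_abs]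
    calc _ ≤ β ^ 2 * (2 * (‖u‖ * ‖v‖)) := by
          gcongr
          exact Gibbs.abs_gibbsExp_mul_sub_mul_le β hρ G u v
      _ = 2 * β ^ 2 * ‖u‖ * ‖v‖ := by ring
end
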